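/- arXiv:1601.04242 — 4 statements merged into one kernel-verified Lean document; each statement's English description precedes it below -/
import Mathlib

section
/- Let Ω ⊆ ℂ be an open set containing the real interval [0,1] (viewed as a subset of ℂ), and let G : ℂ → ℂ be analytic on Ω. If for every k ≥ 0 the k-th derivative G^{(k)}(0) is a nonnegative real number, then G(1) is a nonnegative real number. -/
/-- Iterated derivative of an iterated derivative. -/
lemma iteratedDeriv_iteratedDeriv_aux (k : ℕ) :
    ∀ (G : ℂ → ℂ) (j : ℕ), iteratedDeriv j (iteratedDeriv k G) = iteratedDeriv (k + j) G := by
  induction k with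
  | zero => intro G j; simp [iteratedDeriv_zero]
  | succ k ih =>
    intro G j
    rw [iteratedDeriv_succ' (n := k), ih (deriv G) j, ← iteratedDeriv_succ']
    ring_nf

/-- A convergent sum of nonnegative real complex numbers is a nonnegative real. -/
lemma hasSum_mem_nonnegReal {f : ℕ → ℂ} {a : ℂ}
    (h : HasSum f a) (hf : ∀ n, (f n).im = 0 ∧ 0 ≤ (f n).re) :
    a.im = 0 ∧ 0 ≤ a.re := by
  constructor
  · have him := Complex.hasSum_im h
    have h0 : HasSum (fun n : ℕ => (f n).im) 0 := by
      simpa [funext fun n => (hf n).1] using hasSum_zero (α := ℝ) (β := ℕ)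
    exact (him.unique h0).symm ▸ rfl
  · exact hasSum_le (fun n => (hf n).2) hasSum_zero (Complex.hasSum_re h)

/-- If `G` is analytic on an open set `Ω ⊆ ℂ` containing the real
interval `[0,1]`, and all iterated derivatives of `G` at `0` are nonnegative real
numbers, then `G 1` is a nonnegative real number. -/
theorem analytic_nonneg_deriv_at_zero_implies_nonneg_at_one
    (Ω : Set ℂ) (hΩ : IsOpen Ω)
    (hsub : (fun t : ℝ => (t : ℂ)) '' Set.Icc (0 : ℝ) 1 ⊆ Ω)
    (G : ℂ → ℂ) (hG : AnalyticOnNhd ℂ G Ω)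
    (hderiv : ∀ k : ℕ, (iteratedDeriv k G 0).im = 0 ∧ 0 ≤ (iteratedDeriv k G 0).re) :
    (G 1).im = 0 ∧ 0 ≤ (G 1).re := by
  -- all iterated derivatives are analytic on Ω
  have hGk : ∀ k : ℕ, AnalyticOnNhd ℂ (iteratedDeriv k G) Ω := by
    intro k
    induction k with
    | zero => simpa [iteratedDeriv_zero] using hG
    | succ k ih => rw [iteratedDeriv_succ]; exact ih.deriv
  have hmem : ∀ t : ℝ, t ∈ Set.Icc (0 : ℝ) 1 → (t : ℂ) ∈ Ω := fun t ht => hsub ⟨t, ht, rfl⟩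
  set C : Set ℂ := {z : ℂ | z.im = 0 ∧ 0 ≤ z.re} with hC
  have hCclosed : IsClosed C := by
    have : C = (Complex.im ⁻¹' {0}) ∩ (Complex.re ⁻¹' Set.Ici 0) := by
      ext z; simp [hC, Set.mem_preimage]
    rw [this]
    exact ((isClosed_singleton.preimage Complex.continuous_im)).inter
      ((isClosed_Ici).preimage Complex.continuous_re)
  set S : Set ℝ := {t : ℝ | ∀ k : ℕ, iteratedDeriv k G (t : ℂ) ∈ C} with hS
  -- S ∩ [0,1] is closed
  have hclosed : IsClosed (S ∩ Set.Icc (0 : ℝ) 1) := by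
    have : S ∩ Set.Icc (0 : ℝ) 1 =
        ⋂ k : ℕ, (Set.Icc (0 : ℝ) 1 ∩ (fun t : ℝ => iteratedDeriv k G (t : ℂ)) ⁻¹' C) := by
      ext t
      simp only [Set.mem_inter_iff, Set.mem_iInter, Set.mem_preimage, hS, Set.mem_setOf_eq]
      exact ⟨fun ⟨h1, h2⟩ k => ⟨h2, h1 k⟩, fun h => ⟨fun k => (h k).2, (h 0).1⟩⟩
    rw [this]
    refine isClosed_iInter fun k => ?_
    refine ContinuousOn.preimage_isClosed_of_isClosed ?_ isClosed_Icc hCclosed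
    exact ((hGk k).continuousOn).comp Complex.continuous_ofReal.continuousOn hmem
  -- 0 ∈ S
  have h0 : (0 : ℝ) ∈ S := by
    intro k
    simpa [hC] using hderiv k
  -- the inductive step
  have hstep : ∀ t ∈ S ∩ Set.Ico (0 : ℝ) 1, ∀ y ∈ Set.Ioi t, (S ∩ Set.Ioc t y).Nonempty := by
    rintro t ⟨htS, ht0, ht1⟩ y hy
    have htΩ : (t : ℂ) ∈ Ω := hmem t ⟨ht0, ht1.le⟩
    obtain ⟨r, hr, hball⟩ := Metric.isOpen_iff.mp hΩ _ htΩ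
    set s : ℝ := min y (t + r / 2) with hs
    have hts : t < s := lt_min hy (by linarith)
    have hsy : s ≤ y := min_le_left _ _
    have hst : s - t < r := by
      have : s ≤ t + r / 2 := min_le_right _ _
      linarith
    have hsball : (s : ℂ) ∈ Metric.ball (t : ℂ) r := by
      rw [Metric.mem_ball, Complex.isometry_ofReal.dist_eq, Real.dist_eq,
        abs_of_pos (by linarith)]
      exact hst
    refine ⟨s, ?_, hts, hsy⟩
    intro k
    -- Taylor expansion of the k-th derivative around t
    have hdiff : DifferentiableOn ℂ (iteratedDeriv k G) (Metric.ball (t : ℂ) r) :=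
      ((hGk k).mono hball).differentiableOn
    have hsum := Complex.hasSum_taylorSeries_on_ball hdiff hsball
    refine hasSum_mem_nonnegReal hsum fun n => ?_
    have hcoeff : iteratedDeriv n (iteratedDeriv k G) (t : ℂ) ∈ C := by
      rw [iteratedDeriv_iteratedDeriv_aux k G n]
      exact htS (k + n)
    set c : ℂ := iteratedDeriv n (iteratedDeriv k G) (t : ℂ)
    obtain ⟨him, hre⟩ : c.im = 0 ∧ 0 ≤ c.re := hcoeff
    have hterm : ((n.factorial : ℂ))⁻¹ • ((s : ℂ) - (t : ℂ)) ^ n • c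
        = ((((n.factorial : ℝ))⁻¹ * (s - t) ^ n : ℝ) : ℂ) * c := by
      push_cast
      simp [smul_eq_mul]
      ring
    have ha : (0 : ℝ) ≤ ((n.factorial : ℝ))⁻¹ * (s - t) ^ n := by
      have h1 : (0 : ℝ) ≤ ((n.factorial : ℝ))⁻¹ := by positivity
      have h2 : (0 : ℝ) ≤ (s - t) ^ n := pow_nonneg (by linarith) n
      exact mul_nonneg h1 h2
    rw [hterm]
    generalize hA : ((n.factorial : ℝ))⁻¹ * (s - t) ^ n = A at ha
    constructor
    · rw [Complex.mul_im, Complex.ofReal_im, Complex.ofReal_re, him]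
      ring
    · rw [Complex.mul_re, Complex.ofReal_im, Complex.ofReal_re, him]
      simpa using mul_nonneg ha hre
  have hsubS : Set.Icc (0 : ℝ) 1 ⊆ S :=
    IsClosed.Icc_subset_of_forall_exists_gt hclosed h0 hstep
  have h1 : (1 : ℝ) ∈ S := hsubS ⟨zero_le_one, le_refl 1⟩
  have := h1 0
  simpa [iteratedDeriv_zero, hC, Complex.ofReal_one, Set.mem_setOf_eq] using this
end

section
/- Let Ω ⊆ ℂ be an open set containing the real interval [0,1] (viewed as a subset of ℂ), and let G : ℂ → ℂ be analytic on Ω. If for every k ≥ 0 the k-th derivative G^{(k)}(0) is a nonnegative real number, then for every x ∈ [0,1] and every k ≥ 0, G^{(k)}(x) is a nonnegative real number. -/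
/-!
With the partial order `ComplexOrder`, `0 ≤ z` says that `z` is a nonnegative real number and
`c ≤ z` that `z - c` is one. If every derivative of `f` at `c` is `≥ 0` and `c ≤ z` lies in a
disc around `c` on which `f` is holomorphic, every term of the Taylor expansion of `f⁽ᵏ⁾` at `c`,
evaluated at `z`, is `≥ 0`, hence so is `f⁽ᵏ⁾ z`. The set of `t ∈ [0, 1]` at which all derivatives
of `G` are `≥ 0` is therefore closed, contains `0`, and contains a right neighbourhood of each of
its points, so it is all of `[0, 1]` by continuous induction.
-/

open Set Filter Topology
open scoped ComplexOrder Nat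

theorem iteratedDeriv_iteratedDeriv {𝕜 F : Type*} [NontriviallyNormedField 𝕜]
    [NormedAddCommGroup F] [NormedSpace 𝕜 F] (m n : ℕ) (f : 𝕜 → F) :
    iteratedDeriv m (iteratedDeriv n f) = iteratedDeriv (m + n) f := by
  simp only [iteratedDeriv_eq_iterate, Function.iterate_add]
  rfl

namespace Complex

theorem nonneg_iff_im_eq_zero_and_re_nonneg {z : ℂ} : 0 ≤ z ↔ z.im = 0 ∧ 0 ≤ z.re := by
  rw [nonneg_iff, and_comm, eq_comm]

theorem nonneg_of_iteratedDeriv_nonneg {f : ℂ → ℂ} {c z : ℂ} {r : ℝ}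
    (hf : DifferentiableOn ℂ f (Metric.ball c r)) (hz : z ∈ Metric.ball c r) (hcz : c ≤ z)
    (hc : ∀ n, 0 ≤ iteratedDeriv n f c) : 0 ≤ f z := by
  refine (hasSum_taylorSeries_on_ball hf hz).nonneg fun n => ?_
  have hfact : (0 : ℂ) ≤ (n ! : ℂ)⁻¹ := by
    rw [← ofReal_natCast, ← ofReal_inv]
    exact zero_le_real.2 (by positivity)
  simp only [smul_eq_mul]
  exact mul_nonneg hfact (mul_nonneg (pow_nonneg (sub_nonneg.2 hcz) n) (hc n))

theorem iteratedDeriv_nonneg_of_iteratedDeriv_nonneg {f : ℂ → ℂ} {c z : ℂ} {r : ℝ}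
    (hf : DifferentiableOn ℂ f (Metric.ball c r)) (hz : z ∈ Metric.ball c r) (hcz : c ≤ z)
    (hc : ∀ n, 0 ≤ iteratedDeriv n f c) (k : ℕ) : 0 ≤ iteratedDeriv k f z := by
  have hfk : DifferentiableOn ℂ (iteratedDeriv k f) (Metric.ball c r) := by
    rw [iteratedDeriv_eq_iterate]
    exact ((hf.analyticOnNhd Metric.isOpen_ball).iterated_deriv k).differentiableOn
  refine nonneg_of_iteratedDeriv_nonneg hfk hz hcz fun n => ?_
  rw [iteratedDeriv_iteratedDeriv]
  exact hc (n + k)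

end Complex

/-- If `G` is analytic on an open set `Ω ⊆ ℂ` containing the real
interval `[0,1]`, and all iterated derivatives of `G` at `0` are nonnegative real
numbers, then for every `x ∈ [0,1]` and every `k`, the `k`-th derivative of `G`
at `x` is a nonnegative real number. -/
theorem analytic_nonneg_derivs_on_unit_interval
    (Ω : Set ℂ) (hΩ : IsOpen Ω)
    (hsub : (fun t : ℝ => (t : ℂ)) '' Set.Icc (0 : ℝ) 1 ⊆ Ω)
    (G : ℂ → ℂ) (hG : AnalyticOnNhd ℂ G Ω)
    (hderiv : ∀ k : ℕ, (iteratedDeriv k G 0).im = 0 ∧ 0 ≤ (iteratedDeriv k G 0).re) :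
    ∀ x : ℝ, x ∈ Set.Icc (0 : ℝ) 1 → ∀ k : ℕ,
      (iteratedDeriv k G (x : ℂ)).im = 0 ∧ 0 ≤ (iteratedDeriv k G (x : ℂ)).re := by
  set S : Set ℝ := {t | ∀ k, 0 ≤ iteratedDeriv k G (t : ℂ)}
  have hclosed : IsClosed (S ∩ Icc 0 1) := by
    rw [inter_comm]
    -- "all derivatives are `≥ 0`" is `0 ≤` in the product order on `ℕ → ℂ`
    change IsClosed (Icc (0 : ℝ) 1 ∩ (fun (t : ℝ) k => iteratedDeriv k G (t : ℂ)) ⁻¹' Ici 0)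
    refine ContinuousOn.preimage_isClosed_of_isClosed
      (continuousOn_pi.2 fun k => ?_) isClosed_Icc isClosed_Ici
    rw [iteratedDeriv_eq_iterate]
    exact (hG.iterated_deriv k).continuousOn.comp Complex.continuous_ofReal.continuousOn
      fun t ht => hsub ⟨t, ht, rfl⟩
  have hzero : (0 : ℝ) ∈ S := fun k =>
    Complex.nonneg_iff_im_eq_zero_and_re_nonneg.2 (hderiv k)
  have hstep : ∀ x ∈ S ∩ Ico 0 1, S ∈ 𝓝[>] x := by
    rintro x ⟨hxS, hx0, hx1⟩
    obtain ⟨r, hr, hball⟩ := Metric.isOpen_iff.1 hΩ x (hsub ⟨x, ⟨hx0, hx1.le⟩, rfl⟩)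
    refine mem_of_superset (Ico_mem_nhdsGT (by linarith : x < x + r)) fun t ht => ?_
    have htball : (t : ℂ) ∈ Metric.ball (x : ℂ) r := by
      rw [Metric.mem_ball, Complex.isometry_ofReal.dist_eq, Real.dist_eq,
        abs_of_nonneg (sub_nonneg.2 ht.1)]
      linarith [ht.2]
    exact Complex.iteratedDeriv_nonneg_of_iteratedDeriv_nonneg
      (hG.mono hball).differentiableOn htball (Complex.real_le_real.2 ht.1) hxS
  intro x hx k
  exact Complex.nonneg_iff_im_eq_zero_and_re_nonneg.1
    (hclosed.Icc_subset_of_forall_mem_nhdsWithin hzero hstep hx k)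
end

section
/- For every z ∈ ℂ with |z| < 1, one has (1 + z)² · Log(1 + z) = z + (3/2)·z² + 2·∑_{k=3}^{∞} (−1)^{k−1} · ((k−3)!/k!) · z^k, where Log denotes the principal branch of the complex logarithm, and the series on the right converges for |z| < 1. -/
/-!
Multiply the Taylor series `Log (1 + z) = ∑ (-1)^(n+1) z^n / n` by `(1 + z)^2 = 1 + 2z + z^2`.
For `k ≥ 3` the coefficient of `z^k` is `(-1)^(k-1) (1/k - 2/(k-1) + 1/(k-2))`, and the partial
fraction identity `1/k - 2/(k-1) + 1/(k-2) = 2/(k(k-1)(k-2)) = 2 (k-3)!/k!` turns it into the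
stated one; the coefficients of `z` and `z^2` are `1` and `-1/2 + 2 = 3/2`.
-/

open Nat

theorem HasSum.one_add_sq_mul {R : Type*} [CommRing R] [TopologicalSpace R] [IsTopologicalRing R]
    {a : ℕ → R} {z s : R} (h : HasSum (fun n => a n * z ^ n) s) :
    HasSum (fun j => (a (j + 3) + 2 * a (j + 2) + a (j + 1)) * z ^ (j + 3))
      ((1 + z) ^ 2 * s - (a 0 + (a 1 + 2 * a 0) * z + (a 2 + 2 * a 1 + a 0) * z ^ 2)) := by
  have h₁ := (hasSum_nat_add_iff' 3).2 h
  have h₂ := (hasSum_nat_add_iff' 2).2 (h.mul_left (2 * z))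
  have h₃ := (hasSum_nat_add_iff' 1).2 (h.mul_left (z ^ 2))
  have hsum : (1 + z) ^ 2 * s - (a 0 + (a 1 + 2 * a 0) * z + (a 2 + 2 * a 1 + a 0) * z ^ 2) =
      (s - ∑ i ∈ Finset.range 3, a i * z ^ i) +
        (2 * z * s - ∑ i ∈ Finset.range 2, 2 * z * (a i * z ^ i)) +
        (z ^ 2 * s - ∑ i ∈ Finset.range 1, z ^ 2 * (a i * z ^ i)) := by
    simp only [Finset.sum_range_succ, Finset.sum_range_zero]
    ring
  rw [hsum]
  exact ((h₁.add h₂).add h₃).congr_fun fun j => by ring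

/-- `logCoeff K 0 = 1 / 0 = 0` by the junk-value convention, which is the correct constant
term of `log (1 + z)`. -/
def logCoeff (K : Type*) [Field K] (n : ℕ) : K := (-1) ^ (n + 1) / n

theorem logCoeff_add_three_add_two_mul_add_two_add_add_one {K : Type*} [Field K] [CharZero K]
    (j : ℕ) :
    logCoeff K (j + 3) + 2 * logCoeff K (j + 2) + logCoeff K (j + 1) =
      2 * (-1) ^ (j + 2) * ((j ! : K) / (j + 3)!) := by
  have hfac : ((j + 3)! : K) = (j + 3) * (j + 2) * (j + 1) * j ! := by
    simp only [factorial_succ]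
    push_cast
    ring
  have h₁ : (j : K) + 1 ≠ 0 := by exact_mod_cast (by omega : j + 1 ≠ 0)
  have h₂ : (j : K) + 2 ≠ 0 := by exact_mod_cast (by omega : j + 2 ≠ 0)
  have h₃ : (j : K) + 3 ≠ 0 := by exact_mod_cast (by omega : j + 3 ≠ 0)
  have hj : (j ! : K) ≠ 0 := by exact_mod_cast j.factorial_ne_zero
  rw [hfac]
  simp only [logCoeff]
  push_cast
  field_simp
  ring

/-- For `|z| < 1`,
`(1+z)² Log(1+z) = z + (3/2) z² + 2 ∑_{k=3}^∞ (-1)^{k-1} ((k-3)!/k!) z^k`,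
where the series converges; here stated via `HasSum` for the series indexed by
`k = j + 3`, `j ∈ ℕ`. -/
theorem sq_mul_log_one_add_series (z : ℂ) (hz : ‖z‖ < 1) :
    HasSum
      (fun j : ℕ => 2 * (-1 : ℂ) ^ (j + 3 - 1) *
        ((Nat.factorial (j + 3 - 3) : ℂ) / (Nat.factorial (j + 3))) * z ^ (j + 3))
      ((1 + z) ^ 2 * Complex.log (1 + z) - (z + (3 / 2) * z ^ 2)) := by
  have hlog : HasSum (fun n => logCoeff ℂ n * z ^ n) (Complex.log (1 + z)) := by
    simpa only [logCoeff, div_mul_eq_mul_div] using Complex.hasSum_taylorSeries_log hz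
  have hquad : z + 3 / 2 * z ^ 2 = logCoeff ℂ 0 + (logCoeff ℂ 1 + 2 * logCoeff ℂ 0) * z +
      (logCoeff ℂ 2 + 2 * logCoeff ℂ 1 + logCoeff ℂ 0) * z ^ 2 := by
    norm_num [logCoeff]
  rw [hquad]
  refine hlog.one_add_sq_mul.congr_fun fun j => ?_
  rw [logCoeff_add_three_add_two_mul_add_two_add_add_one]
  rfl
end

section
/- Let c : ℤ² → ℂ be finitely supported and set a := ∑_{(m,n)} c(m,n)·U^m·V^n. If a is self-adjoint (a = a*), then for every (m,n) ∈ ℤ², c(m,n) = conj(c(−m,−n)) · exp(−2πi·m·n·θ). -/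
/-!
The functional `x ↦ τ (U⁻ᵐ x V⁻ⁿ)` reads off the coefficient at `(m, n)` of a finite
combination of the words `Uᵖ V^q`: it sends `Uᵖ V^q` to `τ (U^(p-m) V^(q-n))`, which vanishes
unless `(p, q) = (m, n)`. Moving `V^q` past `U^p` costs the scalar `exp (2πiθ) ^ (p q)`, so
`star (Uᵖ V^q) = exp (-2πi p q θ) U^(-p) V^(-q)`. Comparing the coefficients of `a` and `star a`
at `(m, n)` gives the claim.
-/

theorem mul_pow_eq_pow_smul_pow_mul {M A : Type*} [Monoid M] [Monoid A] [MulAction M A]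
    [IsScalarTower M A A] [SMulCommClass M A A] {u v : A} {w : M}
    (h : u * v = w • (v * u)) (k : ℕ) : u * v ^ k = w ^ k • (v ^ k * u) := by
  have hsemiconj : SemiconjBy u v (w • v) := by rw [SemiconjBy, h, smul_mul_assoc]
  rw [(hsemiconj.pow_right k).eq, smul_pow, smul_mul_assoc]

section Unitary

variable {𝕜 A : Type*} [Field 𝕜] [Ring A] [StarMul A] [Algebra 𝕜 A]

theorem Unitary.mul_inv_eq_inv_smul_inv_mul {u : A} {v : unitary A} {w : 𝕜} (hw : w ≠ 0)
    (h : u * v = w • ((v : A) * u)) : u * ↑v⁻¹ = w⁻¹ • (↑v⁻¹ * u) := by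
  have hinv : (↑v⁻¹ : A) * v = 1 := by simp [← Unitary.star_eq_inv]
  have hinv' : (v : A) * ↑v⁻¹ = 1 := by simp [← Unitary.star_eq_inv]
  have hconj : (↑v⁻¹ : A) * u = w • (u * ↑v⁻¹) := calc
    (↑v⁻¹ : A) * u = ↑v⁻¹ * (u * v) * ↑v⁻¹ := by rw [mul_assoc, mul_assoc, hinv', mul_one]
    _ = w • (u * ↑v⁻¹) := by
      rw [h, mul_smul_comm, smul_mul_assoc, ← mul_assoc, hinv, one_mul]
  rw [hconj, smul_smul, inv_mul_cancel₀ hw, one_smul]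

theorem Unitary.mul_zpow_eq_zpow_smul_zpow_mul {u : A} {v : unitary A} {w : 𝕜} (hw : w ≠ 0)
    (h : u * v = w • ((v : A) * u)) (n : ℤ) : u * ↑(v ^ n) = w ^ n • (↑(v ^ n) * u) := by
  obtain ⟨k, rfl | rfl⟩ := Int.eq_nat_or_neg n
  · simpa using mul_pow_eq_pow_smul_pow_mul h k
  · simpa [zpow_neg, ← inv_pow] using
      mul_pow_eq_pow_smul_pow_mul (Unitary.mul_inv_eq_inv_smul_inv_mul hw h) k

variable {U V : unitary A} {w : 𝕜}

theorem Unitary.zpow_mul_zpow_eq_zpow_smul (hw : w ≠ 0)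
    (hUV : (U : A) * V = w • ((V : A) * U)) (m n : ℤ) :
    ((V ^ n * U ^ m : unitary A) : A) = w ^ (-(m * n)) • ((U ^ m * V ^ n : unitary A) : A) := by
  have hVU : ((V ^ n : unitary A) : A) * U = (w ^ n)⁻¹ • ((U : A) * ↑(V ^ n)) := by
    rw [Unitary.mul_zpow_eq_zpow_smul_zpow_mul hw hUV, smul_smul,
      inv_mul_cancel₀ (zpow_ne_zero n hw), one_smul]
  rw [Submonoid.coe_mul, Submonoid.coe_mul,
    Unitary.mul_zpow_eq_zpow_smul_zpow_mul (inv_ne_zero (zpow_ne_zero n hw)) hVU, ← zpow_neg,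
    ← zpow_mul, neg_mul, mul_comm n m]

theorem Unitary.star_coe_zpow_mul_zpow (hw : w ≠ 0)
    (hUV : (U : A) * V = w • ((V : A) * U)) (p q : ℤ) :
    star ((U ^ p * V ^ q : unitary A) : A) =
      w ^ (-(p * q)) • ((U ^ (-p) * V ^ (-q) : unitary A) : A) := by
  rw [← Unitary.coe_star, Unitary.star_eq_inv, mul_inv_rev, ← zpow_neg, ← zpow_neg,
    Unitary.zpow_mul_zpow_eq_zpow_smul hw hUV, neg_mul_neg]

end Unitary

section Trace

variable {𝕜 A : Type*} [CommSemiring 𝕜] [Semiring A] [StarMul A] [Algebra 𝕜 A]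
  {U V : unitary A} {τ : A →ₗ[𝕜] 𝕜}

theorem map_zpow_mul_zpow_mul_zpow_eq_ite (hτ1 : τ 1 = 1)
    (hτUV : ∀ m n : ℤ, (m, n) ≠ (0, 0) → τ ((U ^ m * V ^ n : unitary A) : A) = 0)
    (m n : ℤ) (p : ℤ × ℤ) :
    τ (↑(U ^ (-m)) * ↑(U ^ p.1 * V ^ p.2) * ↑(V ^ (-n))) = if p = (m, n) then 1 else 0 := by
  have hprod : U ^ (-m) * (U ^ p.1 * V ^ p.2) * V ^ (-n) = U ^ (p.1 - m) * V ^ (p.2 - n) := by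
    group
  rw [← Submonoid.coe_mul, ← Submonoid.coe_mul, hprod]
  split_ifs with hp
  · simp [hp, hτ1]
  · refine hτUV _ _ ?_
    contrapose! hp
    ext <;> simp_all [sub_eq_zero]

theorem map_zpow_mul_sum_mul_zpow (hτ1 : τ 1 = 1)
    (hτUV : ∀ m n : ℤ, (m, n) ≠ (0, 0) → τ ((U ^ m * V ^ n : unitary A) : A) = 0)
    {s : Finset (ℤ × ℤ)} {f : ℤ × ℤ → 𝕜} (hf : ∀ p ∉ s, f p = 0) (e : ℤ × ℤ ≃ ℤ × ℤ)
    (m n : ℤ) :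
    τ (↑(U ^ (-m)) * (∑ p ∈ s, f p • ((U ^ (e p).1 * V ^ (e p).2 : unitary A) : A)) *
      ↑(V ^ (-n))) = f (e.symm (m, n)) := by
  simp_rw [Finset.mul_sum, Finset.sum_mul, map_sum, mul_smul_comm, smul_mul_assoc, map_smul,
    map_zpow_mul_zpow_mul_zpow_eq_ite hτ1 hτUV, ← Equiv.eq_symm_apply e, smul_eq_mul, mul_ite,
    mul_one, mul_zero]
  rw [Finset.sum_ite_eq']
  split_ifs with h
  · rfl
  · exact (hf _ h).symm

end Trace

theorem coeff_symmetry_of_selfAdjoint_general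
    {A : Type*} [CStarAlgebra A]
    (θ : ℝ) (U V : unitary A)
    (hUV : (U : A) * V = Complex.exp (2 * Real.pi * Complex.I * θ) • ((V : A) * U))
    (τ : A →ₗ[ℂ] ℂ) (hτ1 : τ 1 = 1)
    (hτUV : ∀ m n : ℤ, (m, n) ≠ (0, 0) → τ ((U ^ m * V ^ n : unitary A) : A) = 0)
    (c : ℤ × ℤ →₀ ℂ)
    (a : A)
    (ha : a = ∑ p ∈ c.support, c p • ((U ^ p.1 * V ^ p.2 : unitary A) : A))
    (hsa : IsSelfAdjoint a) :
    ∀ m n : ℤ, c (m, n) =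
      (starRingEnd ℂ) (c (-m, -n)) * Complex.exp (-2 * Real.pi * Complex.I * m * n * θ) := by
  intro m n
  set z := Complex.exp (2 * Real.pi * Complex.I * θ)
  have hc : ∀ p ∉ c.support, c p = 0 := fun _ => Finsupp.notMem_support_iff.mp
  have hstar : star a = ∑ p ∈ c.support, (starRingEnd ℂ (c p) * z ^ (-(p.1 * p.2))) •
      ((U ^ (Equiv.neg _ p).1 * V ^ (Equiv.neg _ p).2 : unitary A) : A) := by
    rw [ha, star_sum]
    refine Finset.sum_congr rfl fun p _ => ?_
    rw [star_smul, Unitary.star_coe_zpow_mul_zpow (Complex.exp_ne_zero _) hUV, smul_smul]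
    rfl
  calc c (m, n) = τ (↑(U ^ (-m)) * a * ↑(V ^ (-n))) := by
        rw [ha]
        exact (map_zpow_mul_sum_mul_zpow hτ1 hτUV hc (Equiv.refl _) m n).symm
    _ = τ (↑(U ^ (-m)) * star a * ↑(V ^ (-n))) := by rw [hsa.star_eq]
    _ = starRingEnd ℂ (c (-m, -n)) * z ^ (-(m * n)) := by
        rw [hstar, map_zpow_mul_sum_mul_zpow hτ1 hτUV (fun p hp => by simp [hc p hp])]
        simp
    _ = _ := by
        rw [← Complex.exp_int_mul]
        push_cast
        ring_nf

/-- If `a = ∑ c (m,n) Uᵐ Vⁿ` (finitely supported coefficients)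
is self-adjoint, then `c (m,n) = conj (c (-m,-n)) · exp(-2πi m n θ)` for all
`(m,n) ∈ ℤ²`. -/
theorem coeff_symmetry_of_selfAdjoint
    {A : Type*} [CStarAlgebra A]
    (θ : ℝ) (U V : unitary A)
    (hUV : (U : A) * V = Complex.exp (2 * Real.pi * Complex.I * θ) • ((V : A) * U))
    (τ : A →ₗ[ℂ] ℂ) (hτ1 : τ 1 = 1)
    (hτpos : ∀ x : A, (τ (star x * x)).im = 0 ∧ 0 ≤ (τ (star x * x)).re)
    (hτfaithful : ∀ x : A, τ (star x * x) = 0 → x = 0)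
    (hτtrace : ∀ x y : A, τ (x * y) = τ (y * x))
    (hτUV : ∀ m n : ℤ, (m, n) ≠ (0, 0) → τ ((U ^ m * V ^ n : unitary A) : A) = 0)
    (c : ℤ × ℤ →₀ ℂ)
    (a : A)
    (ha : a = ∑ p ∈ c.support, c p • ((U ^ p.1 * V ^ p.2 : unitary A) : A))
    (hsa : IsSelfAdjoint a) :
    ∀ m n : ℤ, c (m, n) =
      (starRingEnd ℂ) (c (-m, -n)) * Complex.exp (-2 * Real.pi * Complex.I * m * n * θ) :=
  coeff_symmetry_of_selfAdjoint_general θ U V hUV τ hτ1 hτUV c a ha hsa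
end
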